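/- Swap lemma for Ψ(t) = −log t (from the proof of Theorem 4.2, logistic case): let Ψ(t) = −log t, let i, j ∈ [n] satisfy c_i = 1 (so q_i = p_i), p_i ≥ p_j, and h_j ≥ h_i, and let h̄ ∈ ℝ^{Ȳ} be obtained from h by exchanging coordinates i and j (leaving all other coordinates unchanged). Then C_Ψ(h) ≥ C_Ψ(h̄). -/
import Mathlib


open Real

/-- Softmax of a score vector. -/
noncomputable def smax {m : ℕ} (v : Fin m → ℝ) (y : Fin m) : ℝ :=
  Real.exp (v y) / ∑ y' : Fin m, Real.exp (v y')

/-- Conditional RL2D error `C_Ψ(h) = Σ_y [ q_y Ψ(s_y) + (p_y − q_y) Ψ(s_y + s_{n+1}) ]`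
with `q_y = p_y c_y`; label `Fin.last n` is the deferral label. -/
noncomputable def condC {n : ℕ} (Ψ : ℝ → ℝ) (p c : Fin n → ℝ) (v : Fin (n + 1) → ℝ) : ℝ :=
  ∑ y : Fin n, (p y * c y * Ψ (smax v y.castSucc)
    + (p y - p y * c y) * Ψ (smax v y.castSucc + smax v (Fin.last n)))

/-- Conditional regret `ΔC_Ψ(h) = C_Ψ(h) − inf_{h'} C_Ψ(h')`. -/
noncomputable def condRegret {n : ℕ} (Ψ : ℝ → ℝ) (p c : Fin n → ℝ)
    (v : Fin (n + 1) → ℝ) : ℝ :=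
  condC Ψ p c v - ⨅ v' : Fin (n + 1) → ℝ, condC Ψ p c v'

/-- `P(k)`: `p_k` for `k ∈ [n]` and `p_{n+1} = Σ_y p_y (1 − c_y)` for the deferral label. -/
noncomputable def Pfull {n : ℕ} (p c : Fin n → ℝ) (k : Fin (n + 1)) : ℝ :=
  if h : k = Fin.last n then ∑ y : Fin n, p y * (1 - c y) else p (k.castPred h)

/-- Conditional deferral regret `ΔC_def = max{max_y p_y, p_{n+1}} − P(k)`. -/
noncomputable def defRegret {n : ℕ} (p c : Fin n → ℝ) (k : Fin (n + 1)) : ℝ :=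
  max (⨆ y : Fin n, p y) (∑ y : Fin n, p y * (1 - c y)) - Pfull p c k

/-- swap lemma for Ψ(t) = −log t (from the proof of Theorem 4.2,
logistic case): if c_i = 1 (so q_i = p_i), p_i ≥ p_j and h_j ≥ h_i, and h̄
exchanges coordinates i and j of h, then C_Ψ(h̄) ≤ C_Ψ(h).  (The softmax values
are strictly positive, so the convention Ψ(0) = +∞ is never invoked.) -/
theorem swap_lemma_log {n : ℕ} (hn : 2 ≤ n) (p c : Fin n → ℝ)
    (hp0 : ∀ y, 0 ≤ p y) (hp1 : ∑ y : Fin n, p y = 1)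
    (hc : ∀ y, c y ∈ Set.Icc (0 : ℝ) 1)
    (i j : Fin n) (hci : c i = 1) (v : Fin (n + 1) → ℝ)
    (hpij : p j ≤ p i) (hvij : v i.castSucc ≤ v j.castSucc)
    (vbar : Fin (n + 1) → ℝ)
    (hbar : ∀ k : Fin (n + 1), vbar k =
      if k = i.castSucc then v j.castSucc
      else if k = j.castSucc then v i.castSucc else v k) :
    condC (fun t => -Real.log t) p c vbar ≤ condC (fun t => -Real.log t) p c v := by
  classical
  by_cases hij : i = j
  · have hv : vbar = v := by
      funext k
      rw [hbar, hij]
      split_ifs with h1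
      · rw [h1]
      · rfl
    rw [hv]
  · have hZ : ∑ y' : Fin (n+1), Real.exp (vbar y') = ∑ y' : Fin (n+1), Real.exp (v y') := by
      have hv : ∀ k, vbar k = v (Equiv.swap i.castSucc j.castSucc k) := by
        intro k
        rw [hbar, Equiv.swap_apply_def]
        split_ifs <;> rfl
      calc ∑ y' : Fin (n+1), Real.exp (vbar y')
          = ∑ y' : Fin (n+1), Real.exp (v (Equiv.swap i.castSucc j.castSucc y')) := by
            simp_rw [hv]
        _ = _ := Equiv.sum_comp _ (fun k => Real.exp (v k))
    have hZpos : 0 < ∑ y' : Fin (n+1), Real.exp (v y') :=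
      Finset.sum_pos (fun k _ => Real.exp_pos _) Finset.univ_nonempty
    have hne : i.castSucc ≠ j.castSucc := fun h => hij (Fin.castSucc_injective n h)
    have hlasti : (Fin.last n) ≠ i.castSucc := (Fin.castSucc_lt_last i).ne'
    have hlastj : (Fin.last n) ≠ j.castSucc := (Fin.castSucc_lt_last j).ne'
    have hsi : smax vbar i.castSucc = smax v j.castSucc := by
      unfold smax; rw [hZ, hbar, if_pos rfl]
    have hsj : smax vbar j.castSucc = smax v i.castSucc := by
      unfold smax; rw [hZ, hbar, if_neg hne.symm, if_pos rfl]
    have hsl : smax vbar (Fin.last n) = smax v (Fin.last n) := by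
      unfold smax; rw [hZ, hbar, if_neg hlasti, if_neg hlastj]
    have hso : ∀ y : Fin n, y ≠ i → y ≠ j → smax vbar y.castSucc = smax v y.castSucc := by
      intro y hyi hyj
      unfold smax
      rw [hZ, hbar, if_neg (fun h => hyi (Fin.castSucc_injective n h)),
        if_neg (fun h => hyj (Fin.castSucc_injective n h))]
    rw [← sub_nonneg]
    unfold condC
    rw [← Finset.sum_sub_distrib]
    have hzero : ∀ y ∈ (Finset.univ : Finset (Fin n)), y ∉ ({i, j} : Finset (Fin n)) →
        (p y * c y * (fun t => -Real.log t) (smax v y.castSucc)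
          + (p y - p y * c y) * (fun t => -Real.log t) (smax v y.castSucc + smax v (Fin.last n)))
        - (p y * c y * (fun t => -Real.log t) (smax vbar y.castSucc)
          + (p y - p y * c y) * (fun t => -Real.log t) (smax vbar y.castSucc + smax vbar (Fin.last n))) = 0 := by
      intro y _ hy
      simp only [Finset.mem_insert, Finset.mem_singleton] at hy
      push_neg at hy
      rw [hso y hy.1 hy.2, hsl, sub_self]
    rw [← Finset.sum_subset (Finset.subset_univ ({i, j} : Finset (Fin n))) hzero,
      Finset.sum_pair hij]
    rw [hsi, hsj, hsl, hci]
    have hspos : ∀ k, 0 < smax v k := by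
      intro k; unfold smax; exact div_pos (Real.exp_pos _) hZpos
    set a := smax v i.castSucc with ha
    set b := smax v j.castSucc with hb
    set d := smax v (Fin.last n) with hd
    have hapos : 0 < a := hspos _
    have hbpos : 0 < b := hspos _
    have hdpos : 0 < d := hspos _
    have hab : a ≤ b := by
      rw [ha, hb]; unfold smax
      gcongr
    clear_value a b d
    have hL1 : Real.log a ≤ Real.log b := Real.log_le_log hapos hab
    have hL2 : Real.log (a + d) ≤ Real.log (b + d) :=
      Real.log_le_log (by linarith) (by linarith)
    have hL2L1 : Real.log (b + d) - Real.log (a + d) ≤ Real.log b - Real.log a := by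
      have hcross : (b + d) * a ≤ b * (a + d) := by nlinarith
      have h1 : Real.log ((b + d) * a) ≤ Real.log (b * (a + d)) :=
        Real.log_le_log (by positivity) hcross
      rw [Real.log_mul (by positivity) hapos.ne', Real.log_mul hbpos.ne' (by positivity)] at h1
      linarith
    have hq0 : 0 ≤ p j * c j := mul_nonneg (hp0 j) (hc j).1
    have hqp : p j * c j ≤ p j := by nlinarith [(hc j).2, hp0 j]
    have key : (p j - p j * c j) * (Real.log (b + d) - Real.log (a + d)) ≤
        (p i - p j * c j) * (Real.log b - Real.log a) :=
      mul_le_mul (by linarith) hL2L1 (by linarith) (by linarith)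
    simp only
    nlinarith [key]
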